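/- The class of all TU games on N is EMP-closed: for every game v, every equivalence class S in v, and every k ∈ N∖S, there exists a game w such that S ∪ {k} is an equivalence class in w and w'_k = v'_k (i.e., w(T ∪ {k}) − w(T) = v(T ∪ {k}) − v(T) for all T ⊆ N∖{k}). -/

import Mathlib

/-!
Since the players of `S` are interchangeable in `v`, the value `v (C ∪ B)` of a coalition with
`C` disjoint from `S` and `B ⊆ S` depends only on `C` and `#B`. So does the marginal contribution
of `k ∉ S`, which we write `h C m`. A game in which all players of `A = insert k S` are
interchangeable is one of the form `T ↦ f (T \ A) #(T ∩ A)`; its `k`-marginal at `T ∌ k` is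
`f C (m + 1) - f C m`, so `f C m = v C + ∑ j < m, h C j` does the job.
-/

/-- Marginal contribution of player `i` to coalition `S` in game `v`. -/
def marg {N : Type*} [DecidableEq N] (v : Finset N → ℝ) (i : N) (S : Finset N) : ℝ :=
  v (insert i S) - v S

/-- `S` is an equivalence class in `v`. -/
def IsEqClass {N : Type*} [DecidableEq N] (v : Finset N → ℝ) (S : Finset N) : Prop :=
  ∀ i ∈ S, ∀ j ∈ S, ∀ U : Finset N, i ∉ U → j ∉ U → marg v i U = marg v j U

open Finset

section

variable {N : Type*} [DecidableEq N]

namespace IsEqClass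

variable {v : Finset N → ℝ} {S : Finset N}

lemma apply_insert_eq (hS : IsEqClass v S) {i j : N} (hi : i ∈ S) (hj : j ∈ S) {U : Finset N}
    (hiU : i ∉ U) (hjU : j ∉ U) : v (insert i U) = v (insert j U) := by
  simpa [marg] using hS i hi j hj U hiU hjU

lemma apply_union_eq (hS : IsEqClass v S) {B B' : Finset N} (hB : B ⊆ S) (hB' : B' ⊆ S)
    (hcard : #B = #B') {D : Finset N} (hDB : Disjoint D B) (hDB' : Disjoint D B') :
    v (D ∪ B) = v (D ∪ B') := by
  induction B using Finset.induction_on generalizing B' D with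
  | empty => rw [card_eq_zero.mp (hcard.symm.trans card_empty)]
  | insert i B hiB ih =>
    -- Taking `j = i` when `i ∈ B'` lets both cases share the swap step below.
    obtain ⟨j, hjB', hij⟩ : ∃ j ∈ B', i ∉ B'.erase j := by
      by_cases hiB' : i ∈ B'
      · exact ⟨i, hiB', notMem_erase i B'⟩
      · obtain ⟨j, hj⟩ := card_pos.mp (hcard ▸ card_pos.mpr (insert_nonempty i B))
        exact ⟨j, hj, fun h => hiB' (mem_of_mem_erase h)⟩
    have hiD : i ∉ D := disjoint_right.mp hDB (mem_insert_self i B)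
    have hjD : j ∉ D := disjoint_right.mp hDB' hjB'
    have hrest : v (insert i D ∪ B) = v (insert i D ∪ B'.erase j) :=
      ih (insert_subset_iff.mp hB).2 ((erase_subset j B').trans hB')
        (by rw [card_erase_of_mem hjB', ← hcard, card_insert_of_notMem hiB]; rfl)
        (disjoint_insert_left.mpr ⟨hiB, (disjoint_insert_right.mp hDB).2⟩)
        (disjoint_insert_left.mpr ⟨hij, hDB'.mono_right (erase_subset j B')⟩)
    calc v (D ∪ insert i B) = v (insert i D ∪ B'.erase j) := by
          rw [union_insert, ← insert_union, hrest]
      _ = v (insert i (D ∪ B'.erase j)) := by rw [insert_union]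
      _ = v (insert j (D ∪ B'.erase j)) :=
        hS.apply_insert_eq (hB (mem_insert_self i B)) (hB' hjB')
          (by simp [hiD, hij]) (by simp [hjD])
      _ = v (D ∪ B') := by rw [← union_insert, insert_erase hjB']

lemma marg_union_eq (hS : IsEqClass v S) {k : N} (hk : k ∉ S) {B B' : Finset N} (hB : B ⊆ S)
    (hB' : B' ⊆ S) (hcard : #B = #B') {D : Finset N} (hD : Disjoint D S) :
    marg v k (D ∪ B) = marg v k (D ∪ B') := by
  have hkD : Disjoint (insert k D) S := disjoint_insert_left.mpr ⟨hk, hD⟩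
  simp only [marg, ← insert_union]
  rw [hS.apply_union_eq hB hB' hcard (hkD.mono_right hB) (hkD.mono_right hB'),
    hS.apply_union_eq hB hB' hcard (hD.mono_right hB) (hD.mono_right hB')]

end IsEqClass

def countGame (A : Finset N) (f : Finset N → ℕ → ℝ) (T : Finset N) : ℝ :=
  f (T \ A) #(T ∩ A)

lemma marg_countGame {A U : Finset N} {i : N} (hi : i ∈ A) (hiU : i ∉ U)
    (f : Finset N → ℕ → ℝ) :
    marg (countGame A f) i U = f (U \ A) (#(U ∩ A) + 1) - f (U \ A) #(U ∩ A) := by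
  rw [marg, countGame, countGame, insert_sdiff_of_mem U hi, insert_inter_of_mem hi,
    card_insert_of_notMem (fun h => hiU (mem_of_mem_inter_left h))]

lemma isEqClass_countGame (A : Finset N) (f : Finset N → ℕ → ℝ) :
    IsEqClass (countGame A f) A :=
  fun _ hi _ hj _ hiU hjU => by rw [marg_countGame hi hiU, marg_countGame hj hjU]

noncomputable def initSeg (S : Finset N) (m : ℕ) : Finset N :=
  (S.toList.take m).toFinset

lemma initSeg_subset (S : Finset N) (m : ℕ) : initSeg S m ⊆ S := fun _ hx =>
  mem_toList.mp (List.mem_of_mem_take (List.mem_toFinset.mp hx))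

lemma card_initSeg {S : Finset N} {m : ℕ} (hm : m ≤ #S) : #(initSeg S m) = m := by
  rw [initSeg, List.toFinset_card_of_nodup (S.nodup_toList.sublist (List.take_sublist _ _)),
    List.length_take, length_toList, min_eq_left hm]

noncomputable def eqClassExtension (v : Finset N → ℝ) (S : Finset N) (k : N) :
    Finset N → ℝ :=
  countGame (insert k S) fun C m => v C + ∑ j ∈ range m, marg v k (C ∪ initSeg S j)

lemma marg_eqClassExtension {v : Finset N → ℝ} {S : Finset N} (hS : IsEqClass v S) {k : N}
    (hk : k ∉ S) {T : Finset N} (hkT : k ∉ T) :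
    marg (eqClassExtension v S k) k T = marg v k T := by
  have hTA : T ∩ insert k S = T ∩ S := inter_insert_of_notMem hkT
  have hTC : T \ insert k S = T \ S := by rw [sdiff_insert_of_notMem hkT]
  have hm : #(T ∩ S) ≤ #S := card_le_card inter_subset_right
  rw [eqClassExtension, marg_countGame (mem_insert_self k S) hkT, sum_range_succ, hTA, hTC,
    add_sub_add_left_eq_sub, add_sub_cancel_left,
    hS.marg_union_eq hk (initSeg_subset S _) inter_subset_right (card_initSeg hm)
      sdiff_disjoint, sdiff_union_inter]

end

theorem stmt_8_general {N : Type*} [DecidableEq N]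
    (v : Finset N → ℝ) (hv : v ∅ = 0) (S : Finset N) (hS : IsEqClass v S)
    (k : N) (hk : k ∉ S) :
    ∃ w : Finset N → ℝ, w ∅ = 0 ∧ IsEqClass w (insert k S) ∧
      ∀ T : Finset N, k ∉ T → marg w k T = marg v k T :=
  ⟨eqClassExtension v S k, by simp [eqClassExtension, countGame, hv],
    isEqClass_countGame _ _, fun _ hkT => marg_eqClassExtension hS hk hkT⟩

/-- the class of all TU games on `N` is EMP-closed. -/
theorem stmt_8 {N : Type*} [Fintype N] [DecidableEq N] [Nonempty N]
    (v : Finset N → ℝ) (hv : v ∅ = 0) (S : Finset N) (hS : IsEqClass v S)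
    (k : N) (hk : k ∉ S) :
    ∃ w : Finset N → ℝ, w ∅ = 0 ∧ IsEqClass w (insert k S) ∧
      ∀ T : Finset N, k ∉ T → marg w k T = marg v k T :=
  stmt_8_general v hv S hS k hk
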